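/- (Correctness of LWE decryption rounding.) Let p and q be positive integers, let m be an integer, and let e be an integer noise term with |e| < q/(2p) − 1/2. Then ⌊(p/q)·(⌊(q/p)·m⌉ + e)⌉ = m, where ⌊·⌉ denotes rounding a rational (or real) number to the nearest integer. -/
import Mathlib

lemma round_eq_of_abs_sub_lt_half {x : ℝ} {m : ℤ} (h : |x - m| < 1/2) : round x = m := by
  rw [round_eq, Int.floor_eq_iff]
  rw [abs_lt] at h
  constructor <;> push_cast <;> linarith

/-- **Correctness of LWE decryption rounding.**
Let `p` and `q` be positive integers, `m` an integer message and `e` an integer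
noise term with `|e| < q/(2p) - 1/2`.  Then
`⌊(p/q) * (⌊(q/p) * m⌉ + e)⌉ = m`, where `⌊·⌉` denotes rounding to the nearest
integer. -/
theorem lwe_decryption_correct (p q : ℕ) (hp : 0 < p) (hq : 0 < q)
    (m e : ℤ) (he : |(e : ℝ)| < (q : ℝ) / (2 * p) - 1 / 2) :
    round ((p : ℝ) / q * ((round ((q : ℝ) / p * m) : ℝ) + e)) = m := by
  have hp' : (0:ℝ) < p := by exact_mod_cast hp
  have hq' : (0:ℝ) < q := by exact_mod_cast hq
  set r : ℤ := round ((q : ℝ) / p * m) with hr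
  have h1 : |(q : ℝ) / p * m - r| ≤ 1/2 := abs_sub_round _
  apply round_eq_of_abs_sub_lt_half
  have key : (p : ℝ) / q * ((r : ℝ) + e) - m
      = (p / q) * (((r : ℝ) - (q : ℝ) / p * m) + e) := by
    field_simp
    ring
  rw [key, abs_mul, abs_of_pos (by positivity : (0:ℝ) < (p:ℝ)/q)]
  have h2 : |((r : ℝ) - (q : ℝ) / p * m) + e| < (q : ℝ) / p * (1/2) := by
    calc |((r : ℝ) - (q : ℝ) / p * m) + e| ≤ |(r : ℝ) - (q : ℝ) / p * m| + |(e:ℝ)| :=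
          abs_add_le _ _
      _ < 1/2 + ((q : ℝ) / (2 * p) - 1/2) := by
          rw [abs_sub_comm] at h1; linarith
      _ = (q : ℝ) / p * (1/2) := by field_simp; ring
  calc (p : ℝ) / q * |((r : ℝ) - (q : ℝ) / p * m) + e|
      < (p : ℝ) / q * ((q : ℝ) / p * (1/2)) := by
        apply mul_lt_mul_of_pos_left h2 (by positivity)
    _ = 1/2 := by field_simp
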